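/- Let 0 < ζ < 1 and consider the 2^L × 2^L Hermitian matrix M = λ·I − H_XYZ, where H_XYZ = −(1/2) Σ_{j=1}^{L−1} (J₁ σ¹_jσ¹_{j+1} + J₂ σ²_jσ²_{j+1} + J₃ σ³_jσ³_{j+1}) + (h_B)₁ + (h_B)_L with J₁ = 1+ζ, J₂ = 1−ζ, J₃ = (ζ²−1)/2, h_B = λ₁σ¹ + λ₃σ³ with λ₁ = −(1+ζ)y/(1+y²) < 0 (for 0 < y < 1) and λ₃ = ((ζ²−1)/4)(1−y²)/(1+y²), and λ ∈ ℝ is chosen larger than all diagonal entries of H_XYZ. Then M has non-negative entries and is irreducible: some power of M has all entries strictly positive. -/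

import Mathlib

open Matrix

noncomputable section

def sigma1 : Matrix (Fin 2) (Fin 2) ℂ := !![0, 1; 1, 0]
def sigma2 : Matrix (Fin 2) (Fin 2) ℂ := !![0, -Complex.I; Complex.I, 0]
def sigma3 : Matrix (Fin 2) (Fin 2) ℂ := !![1, 0; 0, -1]

/-- The single-site operator `A_j` acting on the `j`-th factor of `(ℂ²)^⊗n`. -/
def siteOp (n : ℕ) (A : Matrix (Fin 2) (Fin 2) ℂ) (j : Fin n) :
    Matrix (Fin n → Fin 2) (Fin n → Fin 2) ℂ := fun x y =>
  if ∀ i, i ≠ j → x i = y i then A (x j) (y j) else 0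

/-- The open XYZ Hamiltonian on a chain with `n+1` sites, with `J₁ = 1+ζ`, `J₂ = 1−ζ`,
`J₃ = (ζ²−1)/2` and boundary field `h_B = λ₁σ¹ + λ₃σ³` (real parameter `y`),
`λ₁ = −(1+ζ)y/(1+y²)`, `λ₃ = ((ζ²−1)/4)(1−y²)/(1+y²)`, at the first and last sites. -/
def HXYZ (ζ y : ℝ) (n : ℕ) : Matrix (Fin (n + 1) → Fin 2) (Fin (n + 1) → Fin 2) ℂ :=
  (-(1 / 2 : ℂ)) • (∑ j : Fin n,
      (((1 + ζ : ℝ) : ℂ) • (siteOp (n + 1) sigma1 j.castSucc * siteOp (n + 1) sigma1 j.succ)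
      + ((1 - ζ : ℝ) : ℂ) • (siteOp (n + 1) sigma2 j.castSucc * siteOp (n + 1) sigma2 j.succ)
      + (((ζ ^ 2 - 1) / 2 : ℝ) : ℂ) •
          (siteOp (n + 1) sigma3 j.castSucc * siteOp (n + 1) sigma3 j.succ)))
  + siteOp (n + 1)
      (((-((1 + ζ) * y) / (1 + y ^ 2) : ℝ) : ℂ) • sigma1
        + ((((ζ ^ 2 - 1) / 4) * ((1 - y ^ 2) / (1 + y ^ 2)) : ℝ) : ℂ) • sigma3) 0
  + siteOp (n + 1)
      (((-((1 + ζ) * y) / (1 + y ^ 2) : ℝ) : ℂ) • sigma1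
        + ((((ζ ^ 2 - 1) / 4) * ((1 - y ^ 2) / (1 + y ^ 2)) : ℝ) : ℂ) • sigma3)
      (Fin.last n)

/-!
For `ζ, y > 0` every off-diagonal entry of `H_XYZ` is real and non-positive: a bond flipping two
aligned spins contributes `−(J₁ − J₂)/2 = −ζ`, one exchanging two anti-aligned spins
`−(J₁ + J₂)/2 = −1`, and the boundary field flipping an end spin `λ₁ < 0`. So `M = λ − H_XYZ` is
non-negative with positive diagonal. Flipping the first spin and then the pairs `(1, 2), …,
(j − 1, j)` flips spin `j` alone, so the graph of positive entries of `M` is strongly connected,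
and with a positive diagonal all entries of a high enough power of `M` are positive.
-/

namespace Matrix

variable {ι R : Type*} [Fintype ι] [DecidableEq ι] [CommSemiring R] [PartialOrder R]
  [IsStrictOrderedRing R] {A : Matrix ι ι R}

lemma pow_succ_apply_pos (hA : ∀ i j, 0 ≤ A i j) {k : ℕ} {i l j : ι}
    (hk : 0 < (A ^ k) i l) (hl : 0 < A l j) : 0 < (A ^ (k + 1)) i j := by
  rw [pow_succ, mul_apply]
  exact Finset.sum_pos' (fun w _ => mul_nonneg (pow_apply_nonneg hA k i w) (hA w j))
    ⟨l, Finset.mem_univ l, mul_pos hk hl⟩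

lemma exists_pow_apply_pos_of_reflTransGen (hA : ∀ i j, 0 ≤ A i j) {i j : ι}
    (h : Relation.ReflTransGen (fun i j => 0 < A i j) i j) : ∃ k, 0 < (A ^ k) i j := by
  induction h with
  | refl => exact ⟨0, by simp⟩
  | tail _ hl ih =>
    obtain ⟨k, hk⟩ := ih
    exact ⟨k + 1, pow_succ_apply_pos hA hk hl⟩

lemma pow_apply_pos_of_le (hA : ∀ i j, 0 ≤ A i j) (hdiag : ∀ i, 0 < A i i) {k m : ℕ}
    (hkm : k ≤ m) {i j : ι} (h : 0 < (A ^ k) i j) : 0 < (A ^ m) i j := by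
  induction m, hkm using Nat.le_induction with
  | base => exact h
  | succ m _ ih => exact pow_succ_apply_pos hA ih (hdiag j)

lemma exists_pow_pos_of_reflTransGen (hA : ∀ i j, 0 ≤ A i j) (hdiag : ∀ i, 0 < A i i)
    (h : ∀ i j, Relation.ReflTransGen (fun i j => 0 < A i j) i j) :
    ∃ k, ∀ i j, 0 < (A ^ k) i j := by
  choose k hk using fun p : ι × ι => exists_pow_apply_pos_of_reflTransGen hA (h p.1 p.2)
  exact ⟨Finset.univ.sup k, fun i j =>
    pow_apply_pos_of_le hA hdiag (Finset.le_sup (Finset.mem_univ (i, j))) (hk (i, j))⟩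

end Matrix

lemma Relation.reflTransGen_of_forall_update {ι α : Type*} [Fintype ι] [DecidableEq ι]
    {r : (ι → α) → (ι → α) → Prop}
    (h : ∀ x i b, Relation.ReflTransGen r x (Function.update x i b)) (x x' : ι → α) :
    Relation.ReflTransGen r x x' := by
  suffices ∀ s : Finset ι, Relation.ReflTransGen r x fun i => if i ∈ s then x' i else x i by
    simpa using this Finset.univ
  intro s
  induction s using Finset.induction_on with
  | empty => simp [Relation.ReflTransGen.refl]
  | insert a s _ ih =>
    convert ih.trans (h _ a (x' a)) using 1
    ext i
    by_cases hi : i = a <;> simp [hi]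

lemma siteOp_mul_siteOp_apply {m : ℕ} (A B : Matrix (Fin 2) (Fin 2) ℂ) {j k : Fin m}
    (hjk : j ≠ k) (x x' : Fin m → Fin 2) :
    (siteOp m A j * siteOp m B k) x x' =
      if ∀ i, i ≠ j → i ≠ k → x i = x' i then A (x j) (x' j) * B (x k) (x' k) else 0 := by
  rw [mul_apply]
  split_ifs with h
  · rw [Finset.sum_eq_single (Function.update x j (x' j))]
    · have hmid : ∀ i, i ≠ k → Function.update x j (x' j) i = x' i := by
        intro i hik
        rcases eq_or_ne i j with rfl | hij
        · simp
        · rw [Function.update_of_ne hij]; exact h i hij hik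
      simp only [siteOp, if_pos (fun i hi => (Function.update_of_ne hi _ _).symm), if_pos hmid,
        Function.update_self, Function.update_of_ne hjk.symm]
    · intro z _ hz
      simp only [siteOp]
      split_ifs with h1 h2
      · refine absurd (funext fun i => ?_) hz
        rcases eq_or_ne i j with rfl | hij
        · rw [Function.update_self]; exact h2 i hjk
        · rw [Function.update_of_ne hij]; exact (h1 i hij).symm
      all_goals simp
    · simp
  · refine Finset.sum_eq_zero fun z _ => ?_
    simp only [siteOp]
    split_ifs with h1 h2
    · exact absurd (fun i hij hik => (h1 i hij).trans (h2 i hik)) h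
    all_goals simp

/-- The entry `((a, c), (b, d))` of `J₁ σ¹⊗σ¹ + J₂ σ²⊗σ² + J₃ σ³⊗σ³`; flipping two aligned spins
gives `J₁ − J₂ = 2ζ`, exchanging two anti-aligned ones `J₁ + J₂ = 2`. -/
def bondCoeff (ζ : ℝ) (a b c d : Fin 2) : ℝ :=
  if a = b ∧ c = d then (ζ ^ 2 - 1) / 2 * (if a = c then 1 else -1)
  else if a ≠ b ∧ c ≠ d then (if a = c then 2 * ζ else 2) else 0

def fieldCoeff (ζ y : ℝ) (a b : Fin 2) : ℝ :=
  if a = b then (ζ ^ 2 - 1) / 4 * ((1 - y ^ 2) / (1 + y ^ 2)) * (if a = 0 then 1 else -1)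
  else -((1 + ζ) * y) / (1 + y ^ 2)

lemma bondCoeff_eq (ζ : ℝ) (a b c d : Fin 2) :
    ((1 + ζ : ℝ) : ℂ) * (sigma1 a b * sigma1 c d)
      + ((1 - ζ : ℝ) : ℂ) * (sigma2 a b * sigma2 c d)
      + (((ζ ^ 2 - 1) / 2 : ℝ) : ℂ) * (sigma3 a b * sigma3 c d)
      = bondCoeff ζ a b c d := by
  fin_cases a <;> fin_cases b <;> fin_cases c <;> fin_cases d <;>
    simp [sigma1, sigma2, sigma3, bondCoeff] <;> ring

lemma fieldCoeff_eq (ζ y : ℝ) (a b : Fin 2) :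
    ((((-((1 + ζ) * y) / (1 + y ^ 2) : ℝ) : ℂ) • sigma1
        + ((((ζ ^ 2 - 1) / 4) * ((1 - y ^ 2) / (1 + y ^ 2)) : ℝ) : ℂ) • sigma3)) a b
      = fieldCoeff ζ y a b := by
  fin_cases a <;> fin_cases b <;> simp [sigma1, sigma3, fieldCoeff]

def bondTerm (ζ : ℝ) {n : ℕ} (x x' : Fin (n + 1) → Fin 2) (j : Fin n) : ℝ :=
  if ∀ i, i ≠ j.castSucc → i ≠ j.succ → x i = x' i then
    bondCoeff ζ (x j.castSucc) (x' j.castSucc) (x j.succ) (x' j.succ)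
  else 0

def fieldTerm (ζ y : ℝ) {m : ℕ} (x x' : Fin m → Fin 2) (s : Fin m) : ℝ :=
  if ∀ i, i ≠ s → x i = x' i then fieldCoeff ζ y (x s) (x' s) else 0

def HXYZReal (ζ y : ℝ) (n : ℕ) : Matrix (Fin (n + 1) → Fin 2) (Fin (n + 1) → Fin 2) ℝ :=
  of fun x x' => -(1 / 2) * ∑ j, bondTerm ζ x x' j + fieldTerm ζ y x x' 0
    + fieldTerm ζ y x x' (Fin.last n)

lemma HXYZ_eq_map (ζ y : ℝ) (n : ℕ) : HXYZ ζ y n = (HXYZReal ζ y n).map (↑) := by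
  ext x x'
  have hbond : ∀ j : Fin n,
      (((1 + ζ : ℝ) : ℂ) • (siteOp (n + 1) sigma1 j.castSucc * siteOp (n + 1) sigma1 j.succ)
        + ((1 - ζ : ℝ) : ℂ) • (siteOp (n + 1) sigma2 j.castSucc * siteOp (n + 1) sigma2 j.succ)
        + (((ζ ^ 2 - 1) / 2 : ℝ) : ℂ) •
          (siteOp (n + 1) sigma3 j.castSucc * siteOp (n + 1) sigma3 j.succ)) x x'
        = bondTerm ζ x x' j := by
    intro j
    have hne : j.castSucc ≠ j.succ := Fin.castSucc_lt_succ.ne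
    simp only [Matrix.add_apply, Matrix.smul_apply, siteOp_mul_siteOp_apply _ _ hne, smul_eq_mul,
      bondTerm]
    split_ifs
    · exact bondCoeff_eq ζ _ _ _ _
    · simp
  have hfield : ∀ s, siteOp (n + 1) (((-((1 + ζ) * y) / (1 + y ^ 2) : ℝ) : ℂ) • sigma1
        + ((((ζ ^ 2 - 1) / 4) * ((1 - y ^ 2) / (1 + y ^ 2)) : ℝ) : ℂ) • sigma3) s x x'
        = fieldTerm ζ y x x' s := by
    intro s
    simp only [siteOp, fieldTerm]
    split_ifs
    · exact fieldCoeff_eq ζ y _ _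
    · simp
  rw [HXYZ, map_apply, HXYZReal, of_apply, Matrix.add_apply, Matrix.add_apply, Matrix.smul_apply,
    Matrix.sum_apply, hfield, hfield, Finset.sum_congr rfl fun j _ => hbond j, smul_eq_mul]
  push_cast
  ring

lemma bondCoeff_nonneg {ζ : ℝ} (hζ : 0 ≤ ζ) {a b c d : Fin 2} (h : ¬(a = b ∧ c = d)) :
    0 ≤ bondCoeff ζ a b c d := by
  simp only [bondCoeff, if_neg h]
  split_ifs <;> linarith

lemma bondCoeff_pos {ζ : ℝ} (hζ : 0 < ζ) {a b c d : Fin 2} (hab : a ≠ b) (hcd : c ≠ d) :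
    0 < bondCoeff ζ a b c d := by
  simp only [bondCoeff, hab, hcd, if_false, ne_eq, not_false_eq_true, and_self, if_true]
  split_ifs <;> linarith

lemma fieldCoeff_neg {ζ y : ℝ} (hζ : -1 < ζ) (hy : 0 < y) {a b : Fin 2} (hab : a ≠ b) :
    fieldCoeff ζ y a b < 0 := by
  rw [fieldCoeff, if_neg hab]
  exact div_neg_of_neg_of_pos (by nlinarith) (by positivity)

section Signs

variable {ζ y : ℝ} {n : ℕ} {x x' : Fin (n + 1) → Fin 2}

lemma bondTerm_nonneg (hζ : 0 ≤ ζ) (hne : x ≠ x') (j : Fin n) : 0 ≤ bondTerm ζ x x' j := by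
  unfold bondTerm
  split_ifs with h
  · refine bondCoeff_nonneg hζ fun ⟨h₁, h₂⟩ => hne (funext fun i => ?_)
    by_cases hi₁ : i = j.castSucc
    · rwa [hi₁]
    by_cases hi₂ : i = j.succ
    · rwa [hi₂]
    exact h i hi₁ hi₂
  · exact le_rfl

lemma fieldTerm_nonpos (hζ : -1 < ζ) (hy : 0 < y) (hne : x ≠ x') (s : Fin (n + 1)) :
    fieldTerm ζ y x x' s ≤ 0 := by
  unfold fieldTerm
  split_ifs with h
  · refine (fieldCoeff_neg hζ hy fun hs => hne (funext fun i => ?_)).le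
    by_cases hi : i = s
    · rwa [hi]
    exact h i hi
  · exact le_rfl

lemma HXYZReal_apply_nonpos (hζ : 0 < ζ) (hy : 0 < y) (hne : x ≠ x') :
    HXYZReal ζ y n x x' ≤ 0 := by
  have hsum : 0 ≤ ∑ j, bondTerm ζ x x' j :=
    Finset.sum_nonneg fun j _ => bondTerm_nonneg hζ.le hne j
  have hζ' : -1 < ζ := by linarith
  have h₀ := fieldTerm_nonpos hζ' hy hne 0
  have h₁ := fieldTerm_nonpos hζ' hy hne (Fin.last n)
  simp only [HXYZReal, of_apply]
  linarith

end Signs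

/-- Flipping the first spin (through the boundary field `λ₁σ¹`) or two neighbouring spins
(through a bond): moves along which `H_XYZ` has a negative matrix element. -/
def FlipMove (n : ℕ) (x x' : Fin (n + 1) → Fin 2) : Prop :=
  ((∀ i, i ≠ 0 → x i = x' i) ∧ x 0 ≠ x' 0) ∨
    ∃ j : Fin n, (∀ i, i ≠ j.castSucc → i ≠ j.succ → x i = x' i) ∧
      x j.castSucc ≠ x' j.castSucc ∧ x j.succ ≠ x' j.succ

lemma FlipMove.ne {n : ℕ} {x x' : Fin (n + 1) → Fin 2} (h : FlipMove n x x') : x ≠ x' := by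
  rintro rfl
  rcases h with ⟨_, h⟩ | ⟨_, _, h, _⟩ <;> exact h rfl

lemma HXYZReal_apply_neg_of_flipMove {ζ y : ℝ} (hζ : 0 < ζ) (hy : 0 < y) {n : ℕ}
    {x x' : Fin (n + 1) → Fin 2} (h : FlipMove n x x') : HXYZReal ζ y n x x' < 0 := by
  have hζ' : -1 < ζ := by linarith
  have hne := h.ne
  simp only [HXYZReal, of_apply]
  rcases h with ⟨hagree, h₀⟩ | ⟨j, hagree, hj₀, hj₁⟩
  · have hfield : fieldTerm ζ y x x' 0 < 0 := by
      rw [fieldTerm, if_pos hagree]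
      exact fieldCoeff_neg hζ' hy h₀
    have hsum : 0 ≤ ∑ j, bondTerm ζ x x' j :=
      Finset.sum_nonneg fun j _ => bondTerm_nonneg hζ.le hne j
    linarith [fieldTerm_nonpos hζ' hy hne (Fin.last n)]
  · have hbond : 0 < bondTerm ζ x x' j := by
      rw [bondTerm, if_pos hagree]
      exact bondCoeff_pos hζ hj₀ hj₁
    have hsum : bondTerm ζ x x' j ≤ ∑ j, bondTerm ζ x x' j :=
      Finset.single_le_sum (fun j _ => bondTerm_nonneg hζ.le hne j) (Finset.mem_univ j)
    linarith [fieldTerm_nonpos hζ' hy hne 0, fieldTerm_nonpos hζ' hy hne (Fin.last n)]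

namespace FlipMove

open Relation Function

/-- Flipping spin `j + 1` is flipping spin `j` followed by flipping the pair `(j, j + 1)`. -/
lemma reflTransGen_update {n : ℕ} (j : Fin (n + 1)) :
    ∀ (x : Fin (n + 1) → Fin 2) (b : Fin 2), ReflTransGen (FlipMove n) x (update x j b) := by
  induction j using Fin.induction with
  | zero =>
    intro x b
    rcases eq_or_ne b (x 0) with rfl | hb
    · rw [update_eq_self]
    · exact .single (.inl ⟨fun i hi => (update_of_ne hi _ _).symm, by simp [hb.symm]⟩)
  | succ j ih =>
    intro x b
    rcases eq_or_ne b (x j.succ) with rfl | hb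
    · rw [update_eq_self]
    have hjs : j.castSucc ≠ j.succ := Fin.castSucc_lt_succ.ne
    refine (ih x (x j.castSucc + 1)).tail (.inr ⟨j, fun i hi₀ hi₁ => ?_, ?_, ?_⟩)
    · rw [update_of_ne hi₀, update_of_ne hi₁]
    · simp [update_of_ne hjs]
    · simpa [update_of_ne hjs.symm] using hb.symm

lemma reflTransGen {n : ℕ} (x x' : Fin (n + 1) → Fin 2) : ReflTransGen (FlipMove n) x x' :=
  reflTransGen_of_forall_update (fun x j b => reflTransGen_update j x b) x x'

end FlipMove

theorem stmt12_general (ζ y : ℝ) (hζ0 : 0 < ζ) (hy0 : 0 < y)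
    (n : ℕ) (lam : ℝ) (hlam : ∀ x, (HXYZ ζ y n x x).re < lam) :
    (∀ x x', (((lam : ℂ) • (1 : Matrix (Fin (n + 1) → Fin 2) (Fin (n + 1) → Fin 2) ℂ)
        - HXYZ ζ y n) x x').im = 0 ∧
      0 ≤ (((lam : ℂ) • (1 : Matrix (Fin (n + 1) → Fin 2) (Fin (n + 1) → Fin 2) ℂ)
        - HXYZ ζ y n) x x').re) ∧
    ∃ m : ℕ, ∀ x x',
      0 < ((((lam : ℂ) • (1 : Matrix (Fin (n + 1) → Fin 2) (Fin (n + 1) → Fin 2) ℂ)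
        - HXYZ ζ y n) ^ m) x x').re := by
  set M := lam • (1 : Matrix (Fin (n + 1) → Fin 2) (Fin (n + 1) → Fin 2) ℝ) - HXYZReal ζ y n
  have hM : (lam : ℂ) • 1 - HXYZ ζ y n = M.map Complex.ofRealHom := by
    ext x x'
    simp [M, HXYZ_eq_map, one_apply, apply_ite]
  have hdiag : ∀ x, 0 < M x x := fun x => by
    simpa [M, HXYZ_eq_map] using hlam x
  have hoff : ∀ {x x'}, x ≠ x' → M x x' = -HXYZReal ζ y n x x' := fun hne => by
    simp [M, one_apply, hne]
  have hnonneg : ∀ x x', 0 ≤ M x x' := fun x x' => by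
    rcases eq_or_ne x x' with rfl | hne
    · exact (hdiag x).le
    · rw [hoff hne]; linarith [HXYZReal_apply_nonpos hζ0 hy0 hne]
  have hmove : ∀ x x', FlipMove n x x' → 0 < M x x' := fun x x' h => by
    rw [hoff h.ne]; linarith [HXYZReal_apply_neg_of_flipMove hζ0 hy0 h]
  obtain ⟨m, hm⟩ := exists_pow_pos_of_reflTransGen hnonneg hdiag fun x x' =>
    Relation.ReflTransGen.mono hmove _ _ (FlipMove.reflTransGen x x')
  refine ⟨fun x x' => ?_, m, fun x x' => ?_⟩
  · rw [hM]
    simpa using hnonneg x x'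
  · rw [hM, ← Matrix.map_pow]
    simpa using hm x x'

/-- for `0 < ζ < 1`, `0 < y < 1` and `λ` larger than every diagonal entry
of `H_XYZ`, the matrix `M = λ·1 − H_XYZ` has (real) non-negative entries and is
irreducible: some power of `M` has all entries strictly positive. -/
theorem stmt12 (ζ y : ℝ) (hζ0 : 0 < ζ) (hζ1 : ζ < 1) (hy0 : 0 < y) (hy1 : y < 1)
    (n : ℕ) (lam : ℝ) (hlam : ∀ x, (HXYZ ζ y n x x).re < lam) :
    (∀ x x', (((lam : ℂ) • (1 : Matrix (Fin (n + 1) → Fin 2) (Fin (n + 1) → Fin 2) ℂ)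
        - HXYZ ζ y n) x x').im = 0 ∧
      0 ≤ (((lam : ℂ) • (1 : Matrix (Fin (n + 1) → Fin 2) (Fin (n + 1) → Fin 2) ℂ)
        - HXYZ ζ y n) x x').re) ∧
    ∃ m : ℕ, ∀ x x',
      0 < ((((lam : ℂ) • (1 : Matrix (Fin (n + 1) → Fin 2) (Fin (n + 1) → Fin 2) ℂ)
        - HXYZ ζ y n) ^ m) x x').re :=
  stmt12_general ζ y hζ0 hy0 n lam hlam
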